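/- arXiv:1103.3197 — 2 statements merged into one kernel-verified Lean document; each statement's English description precedes it below -/
import Mathlib

section
/- For each fixed y ∈ ℝ, the function G(x,y,t) = (4πt)^{-1/2} e^{-(x−y+ct)²/(4t)}/(1+e^{cy}) + (4πt)^{-1/2} e^{-(x−y−ct)²/(4t)}/(1+e^{-cy}) + (c/4)[errfn((y−x+ct)/√(4t)) − errfn((y−x−ct)/√(4t))]·sech²(cy/2) satisfies, as a function of (x,t) on ℝ × (0,∞), the PDE G_t = G_xx − c·tanh(cx/2)·G_x. -/
open MeasureTheory Real Filter

noncomputable def errfn (z : ℝ) : ℝ :=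
  (Real.sqrt Real.pi)⁻¹ * ∫ s in Set.Iio z, Real.exp (-s ^ 2)

noncomputable def psi (c y : ℝ) : ℝ := (1 / Real.cosh (c * y / 2)) ^ 2

noncomputable def Grn (c x y t : ℝ) : ℝ :=
  (Real.sqrt (4 * Real.pi * t))⁻¹ * Real.exp (-(x - y + c * t) ^ 2 / (4 * t)) /
      (1 + Real.exp (c * y))
    + (Real.sqrt (4 * Real.pi * t))⁻¹ * Real.exp (-(x - y - c * t) ^ 2 / (4 * t)) /
      (1 + Real.exp (-(c * y)))
    + c / 4 *
      (errfn ((y - x + c * t) / Real.sqrt (4 * t)) -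
        errfn ((y - x - c * t) / Real.sqrt (4 * t))) * psi c y

noncomputable def eFun (c x t : ℝ) : ℝ :=
  c / 4 *
    (errfn ((x + c * t) / Real.sqrt (4 * t)) - errfn ((x - c * t) / Real.sqrt (4 * t)))

/-! Write `K(t, z) = (4πt)^{-1/2} e^{-z²/(4t)}` for the heat kernel and `K± = K(t, x - y ± ct)`.
Each `K±` solves the heat equation with drift, `∂ₜK± = ∂ₓ²K± ± c ∂ₓK±`, and the errfn
part `E`, whose `x`-derivative is `K+ - K-`, satisfies `∂ₜE = ∂ₓ²E + c (K+ + K-)`. So the residual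
`G_t - G_xx + c tanh(cx/2) G_x` is a combination of `K±` and `∂ₓK± = -(x - y ± ct)/(2t) K±`.
It vanishes because `K+ e^{cx} = K- e^{cy}`: with `T = tanh(cx/2)` this gives
`(1 + T) K+ / (1 + e^{cy}) = (1 - T) K- / (1 + e^{-cy})`, and the weight `(c/4) sech²(cy/2)` of `E`
is exactly the one cancelling the remaining drift terms. -/

theorem hasDerivAt_integral_Iio {E : Type*} [NormedAddCommGroup E] [NormedSpace ℝ E]
    [CompleteSpace E] {f : ℝ → E} (hf : Integrable f) (hcont : Continuous f) (z : ℝ) :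
    HasDerivAt (fun w => ∫ s in Set.Iio w, f s) (f z) z := by
  have hsplit :
      ∀ w, ∫ s in Set.Iio w, f s = (∫ s in Set.Iic 0, f s) + ∫ s in (0 : ℝ)..w, f s := by
    intro w
    rw [← intervalIntegral.integral_Iic_sub_Iic hf.integrableOn hf.integrableOn,
      add_sub_cancel, integral_Iic_eq_integral_Iio]
  simp only [hsplit]
  exact ((hcont.integral_hasStrictDerivAt 0 z).hasDerivAt).const_add _

theorem hasDerivAt_errfn (z : ℝ) : HasDerivAt errfn ((√π)⁻¹ * exp (-z ^ 2)) z := by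
  have hint : Integrable fun s : ℝ => exp (-s ^ 2) := by
    simpa using integrable_exp_neg_mul_sq one_pos
  exact (hasDerivAt_integral_Iio hint (by fun_prop) z).const_mul _

noncomputable def heatKernel (t z : ℝ) : ℝ := (√(4 * π * t))⁻¹ * exp (-z ^ 2 / (4 * t))

theorem heatKernel_neg (t z : ℝ) : heatKernel t (-z) = heatKernel t z := by
  simp [heatKernel]

theorem heatKernel_add_mul (c : ℝ) {t : ℝ} (ht : t ≠ 0) (w : ℝ) :
    heatKernel t (w + c * t) = heatKernel t (w - c * t) * exp (-(c * w)) := by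
  unfold heatKernel
  rw [mul_assoc _ (exp _), ← exp_add]
  congr 2
  field_simp
  ring

theorem heatKernel_eq_errfn_deriv {t : ℝ} (ht : 0 < t) (w : ℝ) :
    heatKernel t w = (√π)⁻¹ * exp (-(w / √(4 * t)) ^ 2) / √(4 * t) := by
  rw [heatKernel, div_pow, sq_sqrt (by positivity), show 4 * π * t = π * (4 * t) by ring,
    sqrt_mul pi_pos.le]
  field_simp

theorem hasDerivAt_heatKernel (t z : ℝ) :
    HasDerivAt (heatKernel t) (-z / (2 * t) * heatKernel t z) z := by
  refine ((((hasDerivAt_pow 2 z).neg.div_const (4 * t)).exp).const_mul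
    (√(4 * π * t))⁻¹).congr_deriv ?_
  simp only [heatKernel, Pi.neg_apply]
  ring

theorem hasDerivAt_neg_div_mul_heatKernel (t z : ℝ) :
    HasDerivAt (fun z => -z / (2 * t) * heatKernel t z)
      ((z ^ 2 / (4 * t ^ 2) - 1 / (2 * t)) * heatKernel t z) z := by
  refine (((hasDerivAt_id' z).neg.div_const (2 * t)).mul
    (hasDerivAt_heatKernel t z)).congr_deriv ?_
  simp only [Pi.neg_apply]
  ring

theorem HasDerivAt.heatKernel_comp {w : ℝ → ℝ} {w' t : ℝ} (hw : HasDerivAt w w' t)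
    (ht : 0 < t) :
    HasDerivAt (fun τ => heatKernel τ (w τ))
      ((w t ^ 2 / (4 * t ^ 2) - 1 / (2 * t) - w' * w t / (2 * t)) * heatKernel t (w t)) t := by
  have hsqrt : HasDerivAt (fun τ => √(4 * π * τ)) (2 * π / √(4 * π * t)) t :=
    (((hasDerivAt_id' t).const_mul (4 * π)).sqrt (by positivity)).congr_deriv (by ring)
  refine ((hsqrt.inv (by positivity)).mul
    ((hw.pow 2).neg.div ((hasDerivAt_id' t).const_mul 4) (by positivity)).exp).congr_deriv ?_
  simp only [heatKernel, Pi.neg_apply, Pi.pow_apply, Pi.div_apply, Pi.inv_apply]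
  field_simp
  rw [sq_sqrt (by positivity)]
  ring

theorem HasDerivAt.errfn_div_sqrt_const {w : ℝ → ℝ} {w' t ξ : ℝ} (hw : HasDerivAt w w' ξ)
    (ht : 0 < t) :
    HasDerivAt (fun ξ => errfn (w ξ / √(4 * t))) (heatKernel t (w ξ) * w') ξ := by
  refine ((hasDerivAt_errfn _).comp ξ (hw.div_const √(4 * t))).congr_deriv ?_
  rw [heatKernel_eq_errfn_deriv ht]
  ring

theorem HasDerivAt.errfn_div_sqrt {w : ℝ → ℝ} {w' t : ℝ} (hw : HasDerivAt w w' t)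
    (ht : 0 < t) :
    HasDerivAt (fun τ => errfn (w τ / √(4 * τ)))
      (heatKernel t (w t) * (w' - w t / (2 * t))) t := by
  have hsqrt : HasDerivAt (fun τ => √(4 * τ)) (2 / √(4 * t)) t :=
    (((hasDerivAt_id' t).const_mul 4).sqrt (by positivity)).congr_deriv (by ring)
  refine ((hasDerivAt_errfn _).comp t (hw.div hsqrt (by positivity))).congr_deriv ?_
  have hs : √(4 * t) ^ 2 = 4 * t := sq_sqrt (by positivity)
  rw [heatKernel_eq_errfn_deriv ht]
  simp only [Pi.div_apply]
  field_simp
  rw [hs]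
  ring

theorem tanh_half_eq (u : ℝ) : tanh (u / 2) = (exp u - 1) / (exp u + 1) := by
  have hu : exp u = exp (u / 2) ^ 2 := by rw [← exp_nat_mul]; ring_nf
  rw [tanh_eq, exp_neg, hu]
  field_simp

theorem psi_eq (c y : ℝ) : psi c y = 4 * exp (c * y) / (1 + exp (c * y)) ^ 2 := by
  have hu : exp (c * y) = exp (c * y / 2) ^ 2 := by rw [← exp_nat_mul]; ring_nf
  rw [psi, cosh_eq, exp_neg, hu]
  field_simp
  ring

noncomputable def grnSpaceDeriv (c x y t : ℝ) : ℝ :=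
  -(x - y + c * t) / (2 * t) * heatKernel t (x - y + c * t) / (1 + exp (c * y))
    + -(x - y - c * t) / (2 * t) * heatKernel t (x - y - c * t) / (1 + exp (-(c * y)))
    + c / 4 * (heatKernel t (x - y + c * t) - heatKernel t (x - y - c * t)) * psi c y

theorem hasDerivAt_grnSpaceDeriv (c y t x : ℝ) :
    HasDerivAt (fun ξ => grnSpaceDeriv c ξ y t)
      (((x - y + c * t) ^ 2 / (4 * t ^ 2) - 1 / (2 * t)) * heatKernel t (x - y + c * t)
          / (1 + exp (c * y))
        + ((x - y - c * t) ^ 2 / (4 * t ^ 2) - 1 / (2 * t)) * heatKernel t (x - y - c * t)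
          / (1 + exp (-(c * y)))
        + c / 4 * (-(x - y + c * t) / (2 * t) * heatKernel t (x - y + c * t)
            - -(x - y - c * t) / (2 * t) * heatKernel t (x - y - c * t)) * psi c y) x := by
  have hu₁ : HasDerivAt (fun ξ => ξ - y + c * t) 1 x :=
    ((hasDerivAt_id' x).sub_const y).add_const _
  have hu₂ : HasDerivAt (fun ξ => ξ - y - c * t) 1 x :=
    ((hasDerivAt_id' x).sub_const y).sub_const _
  refine (((((hasDerivAt_neg_div_mul_heatKernel t _).comp x hu₁).div_const _).add
    (((hasDerivAt_neg_div_mul_heatKernel t _).comp x hu₂).div_const _)).add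
    (((((hasDerivAt_heatKernel t _).comp x hu₁).sub
      ((hasDerivAt_heatKernel t _).comp x hu₂)).const_mul (c / 4)).mul_const
      (psi c y))).congr_deriv ?_
  ring

section

variable (c y : ℝ) {t : ℝ}

theorem hasDerivAt_Grn_space (ht : 0 < t) (x : ℝ) :
    HasDerivAt (fun ξ => Grn c ξ y t) (grnSpaceDeriv c x y t) x := by
  have hu₁ : HasDerivAt (fun ξ => ξ - y + c * t) 1 x :=
    ((hasDerivAt_id' x).sub_const y).add_const _
  have hu₂ : HasDerivAt (fun ξ => ξ - y - c * t) 1 x :=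
    ((hasDerivAt_id' x).sub_const y).sub_const _
  have hv₁ : HasDerivAt (fun ξ => y - ξ + c * t) (-1) x :=
    ((hasDerivAt_id' x).const_sub y).add_const _
  have hv₂ : HasDerivAt (fun ξ => y - ξ - c * t) (-1) x :=
    ((hasDerivAt_id' x).const_sub y).sub_const _
  refine (((((hasDerivAt_heatKernel t _).comp x hu₁).div_const _).add
    (((hasDerivAt_heatKernel t _).comp x hu₂).div_const _)).add
    ((((hv₁.errfn_div_sqrt_const ht).sub (hv₂.errfn_div_sqrt_const ht)).const_mul
      (c / 4)).mul_const (psi c y))).congr_deriv ?_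
  rw [grnSpaceDeriv, show y - x + c * t = -(x - y - c * t) by ring,
    show y - x - c * t = -(x - y + c * t) by ring, heatKernel_neg, heatKernel_neg]
  ring

theorem hasDerivAt_Grn_time (ht : 0 < t) (x : ℝ) :
    HasDerivAt (fun τ => Grn c x y τ)
      (((x - y + c * t) ^ 2 / (4 * t ^ 2) - 1 / (2 * t) - c * (x - y + c * t) / (2 * t))
          * heatKernel t (x - y + c * t) / (1 + exp (c * y))
        + ((x - y - c * t) ^ 2 / (4 * t ^ 2) - 1 / (2 * t) + c * (x - y - c * t) / (2 * t))
          * heatKernel t (x - y - c * t) / (1 + exp (-(c * y)))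
        + c / 4 * ((c + (x - y - c * t) / (2 * t)) * heatKernel t (x - y - c * t)
            + (c - (x - y + c * t) / (2 * t)) * heatKernel t (x - y + c * t)) * psi c y) t := by
  have hu₁ : HasDerivAt (fun τ => x - y + c * τ) c t := by
    simpa using ((hasDerivAt_id' t).const_mul c).const_add (x - y)
  have hu₂ : HasDerivAt (fun τ => x - y - c * τ) (-c) t := by
    simpa using ((hasDerivAt_id' t).const_mul c).const_sub (x - y)
  have hv₁ : HasDerivAt (fun τ => y - x + c * τ) c t := by
    simpa using ((hasDerivAt_id' t).const_mul c).const_add (y - x)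
  have hv₂ : HasDerivAt (fun τ => y - x - c * τ) (-c) t := by
    simpa using ((hasDerivAt_id' t).const_mul c).const_sub (y - x)
  refine ((((hu₁.heatKernel_comp ht).div_const _).add
    ((hu₂.heatKernel_comp ht).div_const _)).add
    ((((hv₁.errfn_div_sqrt ht).sub (hv₂.errfn_div_sqrt ht)).const_mul
      (c / 4)).mul_const (psi c y))).congr_deriv ?_
  rw [show y - x + c * t = -(x - y - c * t) by ring,
    show y - x - c * t = -(x - y + c * t) by ring, heatKernel_neg, heatKernel_neg]
  ring

end

theorem greens_function_solves_linear_pde_general (c : ℝ) (y : ℝ) :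
    ∀ x t : ℝ, 0 < t →
      deriv (fun τ => Grn c x y τ) t =
        deriv (deriv (fun ξ => Grn c ξ y t)) x
          - c * Real.tanh (c * x / 2) * deriv (fun ξ => Grn c ξ y t) x := by
  intro x t ht
  have hGx : deriv (fun ξ => Grn c ξ y t) = fun ξ => grnSpaceDeriv c ξ y t :=
    funext fun ξ => (hasDerivAt_Grn_space c y ht ξ).deriv
  rw [(hasDerivAt_Grn_time c y ht x).deriv, hGx, (hasDerivAt_grnSpaceDeriv c y t x).deriv]
  beta_reduce
  rw [grnSpaceDeriv, heatKernel_add_mul c ht.ne', show -(c * (x - y)) = c * y - c * x by ring,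
    exp_sub, exp_neg, tanh_half_eq, psi_eq]
  field_simp
  ring

theorem greens_function_solves_linear_pde (c : ℝ) (hc : 0 < c) (y : ℝ) :
    ∀ x t : ℝ, 0 < t →
      deriv (fun τ => Grn c x y τ) t =
        deriv (deriv (fun ξ => Grn c ξ y t)) x
          - c * Real.tanh (c * x / 2) * deriv (fun ξ => Grn c ξ y t) x :=
  greens_function_solves_linear_pde_general c y
end

section
/- There is C > 0 such that for all x ∈ ℝ and t > 0: |e(x,t)·(c/4 − e(x,t))| ≤ C(e^{-(x+ct)²/(8t)} + e^{-(x−ct)²/(8t)}), where e(x,t) = (c/4)[errfn((x+ct)/√(4t)) − errfn((x−ct)/√(4t))]. -/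
open MeasureTheory Real Filter

/-!
Write `e = (c/4) D` with `D = errfn A - errfn B ∈ [0, 1]`, where `A = (x + ct)/√(4t)` and
`B = (x - ct)/√(4t)`, so that `e (c/4 - e) = (c/4)² D (1 - D) ≤ (c/4)² min D (1 - D)`.
The Gaussian tail bound `(1/√π) ∫_{|s| ≥ |z|} e^{-s²} ≤ √2 e^{-z²/2}` controls `D` when `A ≤ 0`
(as `D ≤ errfn A`), `D` when `0 ≤ B` (as `D ≤ 1 - errfn B`), and `1 - D` when `B < 0 < A`;
finally `A²/2 = (x + ct)²/(8t)` and likewise for `B`.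
-/

lemma integrable_exp_neg_sq : Integrable (fun s : ℝ => exp (-s ^ 2)) := by
  simpa using integrable_exp_neg_mul_sq one_pos

lemma integral_exp_neg_sq : ∫ s : ℝ, exp (-s ^ 2) = √π := by
  simpa using integral_gaussian 1

/-- Splitting `e^{-s²} = e^{-s²/2} e^{-s²/2}` and bounding the first factor by `e^{-z²/2}`. -/
lemma inv_sqrt_pi_mul_setIntegral_exp_neg_sq_le {S : Set ℝ} (hS : MeasurableSet S) {z : ℝ}
    (hz : ∀ s ∈ S, z ^ 2 ≤ s ^ 2) :
    (√π)⁻¹ * ∫ s in S, exp (-s ^ 2) ≤ √2 * exp (-z ^ 2 / 2) := by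
  have integrable_half : Integrable (fun s : ℝ => exp (-(1 / 2) * s ^ 2)) :=
    integrable_exp_neg_mul_sq (by norm_num)
  have pointwise : ∀ s ∈ S, exp (-s ^ 2) ≤ exp (-z ^ 2 / 2) * exp (-(1 / 2) * s ^ 2) := by
    intro s hs
    rw [← exp_add, exp_le_exp]
    linarith [hz s hs]
  have integral_le : ∫ s in S, exp (-s ^ 2) ≤ exp (-z ^ 2 / 2) * √(2 * π) :=
    calc ∫ s in S, exp (-s ^ 2)
        ≤ ∫ s in S, exp (-z ^ 2 / 2) * exp (-(1 / 2) * s ^ 2) :=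
          setIntegral_mono_on integrable_exp_neg_sq.integrableOn
            (integrable_half.const_mul _).integrableOn hS pointwise
      _ = exp (-z ^ 2 / 2) * ∫ s in S, exp (-(1 / 2) * s ^ 2) := integral_const_mul _ _
      _ ≤ exp (-z ^ 2 / 2) * ∫ s, exp (-(1 / 2) * s ^ 2) :=
          mul_le_mul_of_nonneg_left (setIntegral_le_integral integrable_half
            (ae_of_all _ fun _ => (exp_pos _).le)) (exp_pos _).le
      _ = exp (-z ^ 2 / 2) * √(2 * π) := by
          rw [integral_gaussian]
          congr 2
          ring
  rw [inv_mul_le_iff₀ (sqrt_pos.mpr pi_pos)]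
  calc ∫ s in S, exp (-s ^ 2) ≤ exp (-z ^ 2 / 2) * √(2 * π) := integral_le
    _ = √π * (√2 * exp (-z ^ 2 / 2)) := by
        rw [sqrt_mul zero_le_two]
        ring

lemma one_sub_errfn (z : ℝ) : 1 - errfn z = (√π)⁻¹ * ∫ s in Set.Ici z, exp (-s ^ 2) := by
  have total : (√π)⁻¹ * ∫ s, exp (-s ^ 2) = 1 := by
    rw [integral_exp_neg_sq, inv_mul_cancel₀ (sqrt_pos.mpr pi_pos).ne']
  rw [← total, ← intervalIntegral.integral_Iio_add_Ici (b := z)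
    integrable_exp_neg_sq.integrableOn integrable_exp_neg_sq.integrableOn, errfn]
  ring

lemma errfn_nonneg (z : ℝ) : 0 ≤ errfn z :=
  mul_nonneg (inv_nonneg.mpr (sqrt_nonneg _)) (setIntegral_nonneg measurableSet_Iio
    fun _ _ => (exp_pos _).le)

lemma errfn_le_one (z : ℝ) : errfn z ≤ 1 := by
  have : 0 ≤ 1 - errfn z := by
    rw [one_sub_errfn]
    exact mul_nonneg (inv_nonneg.mpr (sqrt_nonneg _)) (setIntegral_nonneg measurableSet_Ici
      fun _ _ => (exp_pos _).le)
  linarith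

lemma errfn_mono : Monotone errfn := fun _ _ hab =>
  mul_le_mul_of_nonneg_left
    (setIntegral_mono_set integrable_exp_neg_sq.integrableOn
      (ae_of_all _ fun _ => (exp_pos _).le) (Set.Iio_subset_Iio hab).eventuallyLE)
    (inv_nonneg.mpr (sqrt_nonneg _))

lemma errfn_le_of_nonpos {z : ℝ} (hz : z ≤ 0) : errfn z ≤ √2 * exp (-z ^ 2 / 2) :=
  inv_sqrt_pi_mul_setIntegral_exp_neg_sq_le measurableSet_Iio fun s (hs : s < z) => by nlinarith

lemma one_sub_errfn_le_of_nonneg {z : ℝ} (hz : 0 ≤ z) : 1 - errfn z ≤ √2 * exp (-z ^ 2 / 2) :=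
  one_sub_errfn z ▸
    inv_sqrt_pi_mul_setIntegral_exp_neg_sq_le measurableSet_Ici fun s (hs : z ≤ s) => by nlinarith

lemma errfn_sub_mem_Icc {u v : ℝ} (hvu : v ≤ u) : errfn u - errfn v ∈ Set.Icc 0 1 :=
  ⟨sub_nonneg.mpr (errfn_mono hvu), by linarith [errfn_le_one u, errfn_nonneg v]⟩

lemma min_errfn_sub_le (u v : ℝ) :
    min (errfn u - errfn v) (1 - (errfn u - errfn v)) ≤
      √2 * (exp (-u ^ 2 / 2) + exp (-v ^ 2 / 2)) := by
  have hu := exp_pos (-u ^ 2 / 2)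
  have hv := exp_pos (-v ^ 2 / 2)
  have hs := sqrt_nonneg 2
  rcases le_or_gt u 0 with hu0 | hu0
  · refine min_le_of_left_le ?_
    linarith [errfn_nonneg v, errfn_le_of_nonpos hu0, mul_nonneg hs hv.le]
  rcases le_or_gt 0 v with hv0 | hv0
  · refine min_le_of_left_le ?_
    linarith [errfn_le_one u, one_sub_errfn_le_of_nonneg hv0, mul_nonneg hs hu.le]
  · refine min_le_of_right_le ?_
    linarith [one_sub_errfn_le_of_nonneg hu0.le, errfn_le_of_nonpos hv0.le]

lemma abs_mul_one_sub_le_min {D : ℝ} (hD : D ∈ Set.Icc (0 : ℝ) 1) :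
    |D * (1 - D)| ≤ min D (1 - D) := by
  obtain ⟨h0, h1⟩ := hD
  rw [abs_of_nonneg (mul_nonneg h0 (sub_nonneg.mpr h1)), le_min_iff]
  constructor <;> nlinarith

lemma neg_sq_div_sqrt_four_mul_div_two {t : ℝ} (ht : 0 < t) (y : ℝ) :
    -(y / √(4 * t)) ^ 2 / 2 = -y ^ 2 / (8 * t) := by
  rw [div_pow, sq_sqrt (by positivity)]
  field_simp
  ring

theorem e_times_complement_estimate (c : ℝ) (hc : 0 < c) :
    ∃ C > 0, ∀ x t : ℝ, 0 < t →
      |eFun c x t * (c / 4 - eFun c x t)| ≤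
        C * (Real.exp (-(x + c * t) ^ 2 / (8 * t)) +
          Real.exp (-(x - c * t) ^ 2 / (8 * t))) := by
  refine ⟨(c / 4) ^ 2 * √2, by positivity, fun x t ht => ?_⟩
  set A := (x + c * t) / √(4 * t)
  set B := (x - c * t) / √(4 * t)
  have hBA : B ≤ A := div_le_div_of_nonneg_right (by nlinarith) (sqrt_nonneg _)
  have factor : eFun c x t * (c / 4 - eFun c x t) =
      (c / 4) ^ 2 * ((errfn A - errfn B) * (1 - (errfn A - errfn B))) := by
    unfold eFun
    ring
  rw [factor, abs_mul, abs_of_nonneg (sq_nonneg _), mul_assoc,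
    ← neg_sq_div_sqrt_four_mul_div_two ht, ← neg_sq_div_sqrt_four_mul_div_two ht]
  gcongr
  exact (abs_mul_one_sub_le_min (errfn_sub_mem_Icc hBA)).trans (min_errfn_sub_le A B)
end
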